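/- arXiv:1901.10324 — 2 statements merged into one kernel-verified Lean document; each statement's English description precedes it below -/
import Mathlib

section
/- Let A be a C*-algebra and let (A_i)_{i ∈ I} be a family of closed *-subalgebras of A that is directed under inclusion and whose union is dense in A. Then A contains a nonzero projection if and only if there exists an index i such that A_i contains a nonzero projection. -/
/-!
Approximate a nonzero projection `p` by an element of some `S i` and replace it by its real part
`b`. Then `b * b - b` is small, so by spectral mapping the spectrum of `b` misses `(1/3, 2/3)`, and
the continuous function that is `0` below `1/3` and `1` above `2/3` turns `b` into a projection of
the closed subalgebra `S i`. That projection is nonzero, as otherwise the spectrum of `b` would lie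
near `0`, making `‖b‖` small although `‖b‖ ≈ ‖p‖ = 1`.
-/

noncomputable def projectionCutoff (x : ℝ) : ℝ := min 1 (max 0 (3 * x - 1))

@[fun_prop]
lemma continuous_projectionCutoff : Continuous projectionCutoff := by
  unfold projectionCutoff; fun_prop

@[simp]
lemma projectionCutoff_zero : projectionCutoff 0 = 0 := by norm_num [projectionCutoff]

lemma projectionCutoff_mul_self {x : ℝ} (hx : x ≤ 1/3 ∨ 2/3 ≤ x) :
    projectionCutoff x * projectionCutoff x = projectionCutoff x := by
  rcases hx with hx | hx
  · have : projectionCutoff x = 0 := by unfold projectionCutoff; grind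
    simp [this]
  · have : projectionCutoff x = 1 := by unfold projectionCutoff; grind
    simp [this]

lemma le_or_le_of_abs_mul_self_sub_self_lt {x : ℝ} (h : |x * x - x| < 2/9) :
    x ≤ 1/3 ∨ 2/3 ≤ x := by
  by_contra! hx
  have := (abs_lt.mp h).1
  nlinarith

lemma abs_le_of_abs_mul_self_sub_self_le {x ε : ℝ} (hx : x ≤ 1/3) (h : |x * x - x| ≤ ε) :
    |x| ≤ 3/2 * ε := by
  rw [show x * x - x = x * (x - 1) by ring, abs_mul, abs_of_neg (by linarith : x - 1 < 0)] at h
  nlinarith [abs_nonneg x]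

lemma norm_mul_self_sub_self_le_of_norm_sub_le {R : Type*} [NonUnitalSeminormedRing R]
    {b p : R} {δ : ℝ} (hp : IsIdempotentElem p) (hp1 : ‖p‖ ≤ 1) (h : ‖b - p‖ ≤ δ) :
    ‖b * b - b‖ ≤ δ * (3 + δ) := by
  have hb : ‖b‖ ≤ 1 + δ := by
    calc ‖b‖ = ‖p + (b - p)‖ := by rw [add_sub_cancel]
      _ ≤ 1 + δ := (norm_add_le _ _).trans (add_le_add hp1 h)
  have hδ : 0 ≤ δ := (norm_nonneg _).trans h
  have key : b * b - b = b * (b - p) + (b - p) * p - (b - p) := by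
    rw [mul_sub, sub_mul, hp.eq]; abel
  calc ‖b * b - b‖ ≤ ‖b‖ * ‖b - p‖ + ‖b - p‖ * ‖p‖ + ‖b - p‖ := by
        rw [key]
        refine (norm_sub_le _ _).trans (add_le_add_left ((norm_add_le _ _).trans ?_) _)
        exact add_le_add (norm_mul_le _ _) (norm_mul_le _ _)
    _ ≤ (1 + δ) * δ + δ * 1 + δ := by gcongr
    _ = δ * (3 + δ) := by ring

section CStarAlgebra

open scoped ComplexStarModule

variable {A : Type*} [NonUnitalCStarAlgebra A]

lemma abs_mul_self_sub_self_le {b : A} (hb : IsSelfAdjoint b) {x : ℝ}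
    (hx : x ∈ quasispectrum ℝ b) :
    |x * x - x| ≤ ‖b * b - b‖ := by
  have := norm_apply_le_norm_cfcₙ (fun x : ℝ => x * x - x) b hx
  rwa [cfcₙ_sub .., cfcₙ_mul .., cfcₙ_id' ℝ b] at this

lemma isStarProjection_cfcₙ_projectionCutoff {b : A} (hb : IsSelfAdjoint b)
    (h : ‖b * b - b‖ < 2/9) : IsStarProjection (cfcₙ projectionCutoff b) := by
  refine ⟨?_, cfcₙ_predicate _ _⟩
  rw [IsIdempotentElem, ← cfcₙ_mul ..]
  refine cfcₙ_congr fun x hx => projectionCutoff_mul_self ?_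
  exact le_or_le_of_abs_mul_self_sub_self_lt ((abs_mul_self_sub_self_le hb hx).trans_lt h)

lemma norm_le_of_cfcₙ_projectionCutoff_eq_zero {b : A} (hb : IsSelfAdjoint b)
    (h : cfcₙ projectionCutoff b = 0) : ‖b‖ ≤ 3/2 * ‖b * b - b‖ := by
  conv_lhs => rw [← cfcₙ_id' ℝ b]
  refine norm_cfcₙ_le fun x hx =>
    abs_le_of_abs_mul_self_sub_self_le ?_ (abs_mul_self_sub_self_le hb hx)
  have := norm_apply_le_norm_cfcₙ projectionCutoff b hx
  rw [h, norm_zero, norm_le_zero_iff] at this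
  by_contra! hx
  have : 0 < projectionCutoff x := lt_min one_pos (lt_max_of_lt_right (by linarith))
  linarith

lemma IsStarProjection.norm_eq_one {p : A} (hp : IsStarProjection p) (hp0 : p ≠ 0) :
    ‖p‖ = 1 := by
  have h : ‖p‖ * ‖p‖ = ‖p‖ := by
    rw [← CStarRing.norm_star_mul_self, hp.isSelfAdjoint.star_eq, hp.isIdempotentElem.eq]
  exact mul_right_cancel₀ (norm_ne_zero_iff.mpr hp0) (h.trans (one_mul _).symm)

lemma realPart_mem {T : NonUnitalStarSubalgebra ℂ A} {a : A} (ha : a ∈ T) :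
    (ℜ a : A) ∈ T := by
  rw [realPart_apply_coe, ← algebraMap_smul ℂ]
  exact SMulMemClass.smul_mem _ (add_mem ha (star_mem ha))

lemma norm_realPart_sub_le {p : A} (hp : IsSelfAdjoint p) (a : A) :
    ‖(ℜ a : A) - p‖ ≤ ‖a - p‖ := by
  simpa [hp.coe_realPart] using realPart.norm_le (a - p)

lemma exists_isStarProjection_mem_ne_zero {T : NonUnitalStarSubalgebra ℂ A}
    (hT : IsClosed (T : Set A)) {b : A} (hbT : b ∈ T) (hb : IsSelfAdjoint b)
    (h : ‖b * b - b‖ < 2/9) (hb_norm : 3/2 * ‖b * b - b‖ < ‖b‖) :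
    ∃ q ∈ T, IsStarProjection q ∧ q ≠ 0 :=
  ⟨cfcₙ projectionCutoff b, cfcₙ_mem (hs := hT) _ hbT,
    isStarProjection_cfcₙ_projectionCutoff hb h,
    fun h0 => (norm_le_of_cfcₙ_projectionCutoff_eq_zero hb h0).not_gt hb_norm⟩

lemma exists_isStarProjection_mem_ne_zero_of_norm_sub_le {T : NonUnitalStarSubalgebra ℂ A}
    (hT : IsClosed (T : Set A)) {p a : A} (hp : IsStarProjection p) (hp0 : p ≠ 0) (haT : a ∈ T)
    (ha : ‖a - p‖ ≤ 1/20) : ∃ q ∈ T, IsStarProjection q ∧ q ≠ 0 := by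
  set b : A := (ℜ a : A)
  have hbp : ‖b - p‖ ≤ 1/20 := (norm_realPart_sub_le hp.isSelfAdjoint a).trans ha
  have hε : ‖b * b - b‖ ≤ 1/20 * (3 + 1/20) :=
    norm_mul_self_sub_self_le_of_norm_sub_le hp.isIdempotentElem (hp.norm_le p) hbp
  have hb : 1 - 1/20 ≤ ‖b‖ := by
    have := norm_sub_norm_le p b
    rw [hp.norm_eq_one hp0, norm_sub_rev] at this
    linarith
  refine exists_isStarProjection_mem_ne_zero hT (realPart_mem haT) (ℜ a).2 ?_ ?_ <;> linarith

end CStarAlgebra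

theorem stmt1_general {A : Type*} [NonUnitalCStarAlgebra A]
    {ι : Type*} (S : ι → NonUnitalStarSubalgebra ℂ A)
    (hclosed : ∀ i, IsClosed ((S i : NonUnitalStarSubalgebra ℂ A) : Set A))
    (hdense : Dense (⋃ i, ((S i : NonUnitalStarSubalgebra ℂ A) : Set A))) :
    (∃ p : A, p ≠ 0 ∧ star p = p ∧ p * p = p) ↔
      ∃ i, ∃ p ∈ S i, p ≠ 0 ∧ star p = p ∧ p * p = p := by
  refine ⟨fun ⟨p, hp0, hps, hpp⟩ => ?_, fun ⟨_, p, _, hp⟩ => ⟨p, hp⟩⟩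
  obtain ⟨a, ha, hap⟩ := hdense.exists_dist_lt p (show (0 : ℝ) < 1/20 by norm_num)
  obtain ⟨i, hai⟩ := Set.mem_iUnion.mp ha
  rw [dist_comm, dist_eq_norm] at hap
  obtain ⟨q, hqS, hq, hq0⟩ :=
    exists_isStarProjection_mem_ne_zero_of_norm_sub_le (hclosed i) ⟨hpp, hps⟩ hp0 hai hap.le
  exact ⟨i, q, hqS, hq0, hq.isSelfAdjoint, hq.isIdempotentElem⟩

/-- If a C*-algebra `A` is the closure of a directed union of closed *-subalgebras, then `A`
contains a nonzero projection iff one of the subalgebras does. -/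
theorem stmt1 {A : Type*} [NonUnitalCStarAlgebra A]
    {ι : Type*} (S : ι → NonUnitalStarSubalgebra ℂ A)
    (hclosed : ∀ i, IsClosed ((S i : NonUnitalStarSubalgebra ℂ A) : Set A))
    (hdir : Directed (· ≤ ·) S)
    (hdense : Dense (⋃ i, ((S i : NonUnitalStarSubalgebra ℂ A) : Set A))) :
    (∃ p : A, p ≠ 0 ∧ star p = p ∧ p * p = p) ↔
      ∃ i, ∃ p ∈ S i, p ≠ 0 ∧ star p = p ∧ p * p = p :=
  stmt1_general S hclosed hdense
end

section
/- Let A be a C*-algebra, let (A_i)_{i ∈ I} be a family of closed *-subalgebras of A that is directed under inclusion and whose union is dense in A, and let N be a positive natural number. Then the C*-algebra M_N(A) of N×N matrices over A contains a nonzero projection if and only if there exists an index i such that M_N(A) contains a nonzero projection all of whose matrix entries lie in A_i. -/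
/-!
Approximate the projection `q` entrywise from the dense union; by directedness all entries of
the approximant lie in a single `S i`, and passing to its real part makes it self-adjoint.
Newton's iteration `x ↦ 3x² - 2x³` for `x² = x` converges from any almost-idempotent `c`, stays
in every closed set it preserves (here: self-adjoint matrices over `S i`), and moves `c` by
`O(‖c² - c‖)`, so its limit is a projection close to `q`, hence nonzero. Matrices carry the
`ℓ∞`-operator norm: a complete submultiplicative norm inducing the entrywise topology.
-/

open Filter Topology

def newtonIdempotent {R : Type*} [NonUnitalRing R] (x : R) : R := 3 • (x * x) - 2 • (x * x * x)

lemma IsSelfAdjoint.newtonIdempotent {R : Type*} [NonUnitalRing R] [StarRing R] {x : R}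
    (hx : IsSelfAdjoint x) : IsSelfAdjoint (_root_.newtonIdempotent x) := by
  simp only [IsSelfAdjoint, _root_.newtonIdempotent, star_sub, star_nsmul, star_mul, hx.star_eq,
    mul_assoc]

section NewtonIdempotent

variable {B : Type*} [NonUnitalNormedRing B]

lemma newtonIdempotent_sub_self (x : B) :
    newtonIdempotent x - x = (x * x - x) - 2 • (x * (x * x - x)) := by
  unfold newtonIdempotent; noncomm_ring

lemma newtonIdempotent_mul_self_sub_self (x : B) :
    newtonIdempotent x * newtonIdempotent x - newtonIdempotent x =
      4 • ((x * x - x) * (x * x - x) * (x * x - x)) - 3 • ((x * x - x) * (x * x - x)) := by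
  unfold newtonIdempotent; noncomm_ring

lemma norm_newtonIdempotent_sub_self_le (x : B) :
    ‖newtonIdempotent x - x‖ ≤ (1 + 2 * ‖x‖) * ‖x * x - x‖ := by
  rw [newtonIdempotent_sub_self]
  calc _ ≤ ‖x * x - x‖ + ‖2 • (x * (x * x - x))‖ := norm_sub_le _ _
    _ ≤ ‖x * x - x‖ + 2 * (‖x‖ * ‖x * x - x‖) := by
        grw [norm_nsmul_le, norm_mul_le]; norm_num
    _ = _ := by ring

lemma norm_newtonIdempotent_mul_self_sub_self_le {x : B} (hx : ‖x * x - x‖ ≤ 1) :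
    ‖newtonIdempotent x * newtonIdempotent x - newtonIdempotent x‖ ≤ 7 * ‖x * x - x‖ ^ 2 := by
  rw [newtonIdempotent_mul_self_sub_self]
  set y := x * x - x
  have hy2 : ‖y * y‖ ≤ ‖y‖ ^ 2 := (norm_mul_le _ _).trans_eq (sq _).symm
  have hy3 : ‖y * y * y‖ ≤ ‖y‖ ^ 2 := calc
    _ ≤ ‖y * y‖ * ‖y‖ := norm_mul_le _ _
    _ ≤ ‖y‖ ^ 2 * 1 := by gcongr
    _ = _ := mul_one _
  calc _ ≤ ‖4 • (y * y * y)‖ + ‖3 • (y * y)‖ := norm_sub_le _ _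
    _ ≤ 4 * ‖y * y * y‖ + 3 * ‖y * y‖ := by grw [norm_nsmul_le, norm_nsmul_le]; norm_num
    _ ≤ 7 * ‖y‖ ^ 2 := by linarith

/-- The bound `1 / 14` makes `7 ‖x * x - x‖ ≤ 1 / 2`, so the defect at least halves at each step,
and keeps every iterate within distance `1` of `u 0`, where `1 + 2 ‖x‖ ≤ 3 + 2 ‖u 0‖`. -/
lemma newtonIdempotent_orbit_bounds {u : ℕ → B} (hu : ∀ n, u (n + 1) = newtonIdempotent (u n))
    (hsmall : (3 + 2 * ‖u 0‖) * ‖u 0 * u 0 - u 0‖ ≤ 1 / 14) (n : ℕ) :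
    ‖u n * u n - u n‖ ≤ ‖u 0 * u 0 - u 0‖ * (1 / 2) ^ n ∧
      ‖u n‖ ≤ ‖u 0‖ + 2 * (3 + 2 * ‖u 0‖) * ‖u 0 * u 0 - u 0‖ * (1 - (1 / 2) ^ n) := by
  set K := 3 + 2 * ‖u 0‖
  set δ := ‖u 0 * u 0 - u 0‖
  have hδ : 0 ≤ δ := norm_nonneg _
  have hK : 3 ≤ K := by simp only [K]; linarith [norm_nonneg (u 0)]
  induction n with
  | zero => simp [δ]
  | succ n ih =>
    rw [pow_succ]
    set t : ℝ := (1 / 2) ^ n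
    obtain ⟨hdefect, hnorm⟩ := ih
    have ht0 : 0 < t := by positivity
    have ht1 : t ≤ 1 := pow_le_one₀ (by norm_num) (by norm_num)
    set d := ‖u n * u n - u n‖
    have hd0 : 0 ≤ d := norm_nonneg _
    have hδ42 : δ ≤ 1 / 42 := by nlinarith
    have hd : d ≤ 1 / 42 := hdefect.trans (by nlinarith)
    have hstep : ‖u (n + 1) - u n‖ ≤ K * d := by
      rw [hu]
      exact (norm_newtonIdempotent_sub_self_le _).trans (by gcongr; nlinarith)
    constructor
    · calc ‖u (n + 1) * u (n + 1) - u (n + 1)‖ ≤ 7 * d ^ 2 := by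
            rw [hu]; exact norm_newtonIdempotent_mul_self_sub_self_le (hd.trans (by norm_num))
        _ ≤ δ * (t * (1 / 2)) := by nlinarith [mul_le_mul hdefect hd hd0 (by positivity)]
    · calc ‖u (n + 1)‖ ≤ ‖u n‖ + ‖u (n + 1) - u n‖ := norm_le_norm_add_norm_sub' _ _
        _ ≤ ‖u 0‖ + 2 * K * δ * (1 - t) + K * (δ * t) := by gcongr; exact hstep.trans (by gcongr)
        _ = ‖u 0‖ + 2 * K * δ * (1 - t * (1 / 2)) := by ring

theorem exists_isIdempotentElem_near [CompleteSpace B] {C : Set B} (hC : IsClosed C)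
    (hCf : Set.MapsTo newtonIdempotent C C) {c : B} (hc : c ∈ C)
    (hsmall : (3 + 2 * ‖c‖) * ‖c * c - c‖ ≤ 1 / 14) :
    ∃ p ∈ C, IsIdempotentElem p ∧ ‖c - p‖ ≤ 2 * ((3 + 2 * ‖c‖) * ‖c * c - c‖) := by
  set u : ℕ → B := fun n ↦ newtonIdempotent^[n] c
  have hu (n : ℕ) : u (n + 1) = newtonIdempotent (u n) := Function.iterate_succ_apply' _ _ _
  have hbounds := newtonIdempotent_orbit_bounds hu hsmall
  simp only [show u 0 = c from rfl] at hbounds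
  have hdist (n : ℕ) : dist (u n) (u (n + 1)) ≤ (3 + 2 * ‖c‖) * ‖c * c - c‖ * (1 / 2) ^ n := by
    obtain ⟨hdefect, hnorm⟩ := hbounds n
    have hKδ : 0 ≤ (3 + 2 * ‖c‖) * ‖c * c - c‖ := by positivity
    have ht : 0 ≤ (1 / 2 : ℝ) ^ n := by positivity
    have hnorm' : 1 + 2 * ‖u n‖ ≤ 3 + 2 * ‖c‖ := by nlinarith [mul_nonneg hKδ ht]
    rw [dist_comm, dist_eq_norm, hu, mul_assoc]
    exact (norm_newtonIdempotent_sub_self_le _).trans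
      (mul_le_mul hnorm' hdefect (norm_nonneg _) (by positivity))
  obtain ⟨p, hp⟩ :=
    cauchySeq_tendsto_of_complete (cauchySeq_of_le_geometric _ _ (by norm_num) hdist)
  refine ⟨p, hC.mem_of_tendsto hp (Eventually.of_forall fun n ↦ hCf.iterate n hc), ?_, ?_⟩
  · have hdefect : Tendsto (fun n ↦ u n * u n - u n) atTop (𝓝 0) := by
      refine squeeze_zero_norm (fun n ↦ (hbounds n).1) ?_
      simpa using (tendsto_pow_atTop_nhds_zero_of_lt_one (r := (1 / 2 : ℝ)) (by norm_num)
        (by norm_num)).const_mul ‖c * c - c‖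
    exact sub_eq_zero.mp (tendsto_nhds_unique ((hp.mul hp).sub hp) hdefect)
  · have := dist_le_of_le_geometric_of_tendsto₀ _ _ (by norm_num) hdist hp
    rw [dist_eq_norm, show (1 : ℝ) - 1 / 2 = 2⁻¹ by norm_num, div_inv_eq_mul] at this
    exact this.trans_eq (mul_comm _ _)

theorem IsIdempotentElem.eventually_exists_isIdempotentElem_ne_zero [CompleteSpace B] {q : B}
    (hq : IsIdempotentElem q) (hq0 : q ≠ 0) :
    ∀ᶠ c in 𝓝 q, ∀ C : Set B, IsClosed C → Set.MapsTo newtonIdempotent C C → c ∈ C →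
      ∃ p ∈ C, IsIdempotentElem p ∧ p ≠ 0 := by
  set g : B → ℝ := fun c ↦ (3 + 2 * ‖c‖) * ‖c * c - c‖
  have hg : Tendsto g (𝓝 q) (𝓝 0) := by
    have : Continuous g := by fun_prop
    simpa [g, hq.eq] using this.tendsto q
  have herr : Tendsto (fun c ↦ 2 * g c + ‖c - q‖) (𝓝 q) (𝓝 0) := by
    simpa using (hg.const_mul 2).add (tendsto_norm_sub_self q)
  filter_upwards [hg.eventually_lt_const (by norm_num : (0 : ℝ) < 1 / 14),
    herr.eventually_lt_const (norm_pos_iff.mpr hq0)] with c hsmall hclose C hC hCf hc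
  obtain ⟨p, hpC, hp, hcp⟩ := exists_isIdempotentElem_near hC hCf hc hsmall.le
  refine ⟨p, hpC, hp, fun hp0 ↦ hclose.not_ge ?_⟩
  calc ‖q‖ ≤ ‖c - p‖ + ‖c - q‖ := by
        rw [hp0, sub_zero, norm_sub_rev]; exact norm_le_norm_add_norm_sub' q c
    _ ≤ 2 * g c + ‖c - q‖ := by gcongr

end NewtonIdempotent

section Matrix

variable {m n α : Type*}

lemma IsClosed.matrix [TopologicalSpace α] {s : Set α} (hs : IsClosed s) :
    IsClosed (s.matrix : Set (Matrix m n α)) := by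
  rw [Set.matrix_eq_pi]
  exact (isClosed_set_pi fun _ _ ↦ isClosed_set_pi fun _ _ ↦ hs).preimage continuous_id

lemma Dense.matrix [TopologicalSpace α] {s : Set α} (hs : Dense s) :
    Dense (s.matrix : Set (Matrix m n α)) := by
  rw [Set.matrix_eq_pi]
  exact dense_pi _ fun _ _ ↦ dense_pi _ fun _ _ ↦ hs

lemma Directed.exists_mem_matrix_of_mem_matrix_iUnion [Finite m] [Finite n] {ι : Type*}
    [Nonempty ι] {S : ι → Set α} (hS : Directed (· ⊆ ·) S) {M : Matrix m n α}
    (hM : M ∈ (⋃ i, S i).matrix) : ∃ i, M ∈ (S i).matrix := by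
  choose idx hidx using fun kl : m × n ↦ Set.mem_iUnion.mp (hM kl.1 kl.2)
  obtain ⟨i, hi⟩ := hS.finite_le idx
  exact ⟨i, fun k l ↦ hi (k, l) (hidx (k, l))⟩

lemma newtonIdempotent_mem_matrix [Fintype m] [NonUnitalRing α] {T : Type*} [SetLike T α]
    [NonUnitalSubringClass T α] {s : T} {x : Matrix m m α} (hx : x ∈ (s : Set α).matrix) :
    newtonIdempotent x ∈ (s : Set α).matrix := by
  have hmul {y z : Matrix m m α} (hy : y ∈ (s : Set α).matrix) (hz : z ∈ (s : Set α).matrix) :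
      y * z ∈ (s : Set α).matrix :=
    fun k l ↦ sum_mem fun j _ ↦ mul_mem (hy k j) (hz j l)
  exact fun k l ↦ sub_mem (nsmul_mem (hmul hx hx k l) 3) (nsmul_mem (hmul (hmul hx hx) hx k l) 2)

lemma realPart_mem_matrix [AddCommGroup α] [Module ℂ α] [StarAddMonoid α] [StarModule ℂ α]
    {T : Type*} [SetLike T α] [AddMemClass T α] [StarMemClass T α] [SMulMemClass T ℂ α] {s : T}
    {x : Matrix m m α} (hx : x ∈ (s : Set α).matrix) :
    (realPart x : Matrix m m α) ∈ (s : Set α).matrix := by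
  intro k l
  rw [realPart_apply_coe, ← Complex.coe_smul]
  exact SMulMemClass.smul_mem _ (add_mem (hx k l) (star_mem (hx l k)))

end Matrix

lemma IsSelfAdjoint.exists_realPart_mem_of_dense {E : Type*} [TopologicalSpace E] [AddCommGroup E]
    [Module ℂ E] [StarAddMonoid E] [StarModule ℂ E] [ContinuousAdd E] [ContinuousStar E]
    [ContinuousConstSMul ℂ E] {D : Set E} (hD : Dense D) {q : E} (hq : IsSelfAdjoint q)
    {U : Set E} (hU : U ∈ 𝓝 q) : ∃ b ∈ D, (realPart b : E) ∈ U := by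
  have hcont : Continuous fun x : E ↦ (realPart x : E) := by
    simp only [realPart_apply_coe, ← Complex.coe_smul]
    fun_prop
  exact hD.inter_nhds_nonempty
    (hcont.continuousAt.preimage_mem_nhds (by rwa [hq.coe_realPart] : U ∈ 𝓝 (realPart q : E)))

theorem stmt2_general {A : Type*} [NonUnitalCStarAlgebra A]
    {ι : Type*} (S : ι → NonUnitalStarSubalgebra ℂ A)
    (hclosed : ∀ i, IsClosed ((S i : NonUnitalStarSubalgebra ℂ A) : Set A))
    (hdir : Directed (· ≤ ·) S)
    (hdense : Dense (⋃ i, ((S i : NonUnitalStarSubalgebra ℂ A) : Set A)))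
    (N : ℕ) :
    (∃ q : Matrix (Fin N) (Fin N) A, q ≠ 0 ∧ star q = q ∧ q * q = q) ↔
      ∃ i, ∃ q : Matrix (Fin N) (Fin N) A,
        (∀ k l : Fin N, q k l ∈ S i) ∧ q ≠ 0 ∧ star q = q ∧ q * q = q := by
  refine ⟨fun ⟨q, hq0, hqs, hqq⟩ ↦ ?_, fun ⟨_, q, _, hq⟩ ↦ ⟨q, hq⟩⟩
  let := @Matrix.linftyOpNonUnitalNormedRing (Fin N) A _ _
  have : @CompleteSpace (Matrix (Fin N) (Fin N) A) PseudoMetricSpace.toUniformSpace := Pi.complete _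
  obtain ⟨i₀, -⟩ := Set.nonempty_iUnion.mp hdense.nonempty
  have : Nonempty ι := ⟨i₀⟩
  obtain ⟨b, hb, hbq⟩ := IsSelfAdjoint.exists_realPart_mem_of_dense hdense.matrix hqs
    (IsIdempotentElem.eventually_exists_isIdempotentElem_ne_zero hqq hq0)
  obtain ⟨i, hbi⟩ := (hdir.mono_comp _ fun _ _ h ↦ h).exists_mem_matrix_of_mem_matrix_iUnion hb
  obtain ⟨p, ⟨hpS, hps⟩, hp, hp0⟩ := hbq ((S i : Set A).matrix ∩ {x | IsSelfAdjoint x})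
    ((hclosed i).matrix.inter (isClosed_eq continuous_star continuous_id))
    (fun x hx ↦ ⟨newtonIdempotent_mem_matrix hx.1, hx.2.newtonIdempotent⟩)
    ⟨realPart_mem_matrix hbi, (realPart b).2⟩
  exact ⟨i, p, hpS, hp0, hps, hp⟩

/-- Matrix-algebra form: if a C*-algebra `A` is the closure of a directed union of closed
*-subalgebras, then `M_N(A)` contains a nonzero projection iff, for some index `i`, it contains
a nonzero projection all of whose entries lie in `A_i`. -/
theorem stmt2 {A : Type*} [NonUnitalCStarAlgebra A]
    {ι : Type*} (S : ι → NonUnitalStarSubalgebra ℂ A)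
    (hclosed : ∀ i, IsClosed ((S i : NonUnitalStarSubalgebra ℂ A) : Set A))
    (hdir : Directed (· ≤ ·) S)
    (hdense : Dense (⋃ i, ((S i : NonUnitalStarSubalgebra ℂ A) : Set A)))
    (N : ℕ) (hN : 0 < N) :
    (∃ q : Matrix (Fin N) (Fin N) A, q ≠ 0 ∧ star q = q ∧ q * q = q) ↔
      ∃ i, ∃ q : Matrix (Fin N) (Fin N) A,
        (∀ k l : Fin N, q k l ∈ S i) ∧ q ≠ 0 ∧ star q = q ∧ q * q = q :=
  stmt2_general S hclosed hdir hdense N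
end
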